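/- Non-oscillation of quiddity Hill equations: let (v_0, …, v_{n−1}) be a Farey n-gon with quiddity (q_0, …, q_{n−1}), extended n-periodically. If V : ℤ → ℤ satisfies V_{j+1} = q_{j mod n} · V_j − V_{j−1} for all j ∈ ℤ, and V_{−1} < 0 and V_0 > 0, then V_j > 0 for all 0 ≤ j ≤ n−1. -/

import Mathlib

/-- `fdet (a,b) (c,d) = a*d - b*c`. -/
def fdet (u v : ℤ × ℤ) : ℤ := u.1 * v.2 - u.2 * v.1

/-- A primitive vector `(a,b) ∈ ℤ²`: `gcd(a,b) = 1`, `b ≥ 0`, and `a = 1` whenever `b = 0`. -/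
def IsPrimitive (u : ℤ × ℤ) : Prop := Int.gcd u.1 u.2 = 1 ∧ 0 ≤ u.2 ∧ (u.2 = 0 → u.1 = 1)

/-- A Farey `n`-gon: primitive vectors `v 0, …, v (n-1)` with `det(v i, v j) > 0`
for `i < j < n`, `det(v i, v (i+1)) = 1` for `i + 1 < n`, and `det(v 0, v (n-1)) = 1`. -/
def IsFareyPolygon (n : ℕ) (v : ℕ → ℤ × ℤ) : Prop :=
  (∀ i < n, IsPrimitive (v i)) ∧
  (∀ i j, i < j → j < n → 0 < fdet (v i) (v j)) ∧
  (∀ i, i + 1 < n → fdet (v i) (v (i + 1)) = 1) ∧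
  fdet (v 0) (v (n - 1)) = 1

/-! Consecutive vertices of a Farey polygon satisfy the same three-term recurrence as `V`:
`v (k+2) = q (k+1) • v (k+1) - v k`. Hence `k ↦ det(v k, w)` solves the Hill equation on
`0, …, n-1` for every `w`, and matching initial values (with `v (-1) = -v (n-1)`) gives
`V k = V 0 * det(v k, v (n-1)) - V (-1) * det(v 0, v k)`. Both determinants are nonnegative,
the second positive for `k > 0`, and the signs of `V 0`, `V (-1)` do the rest. -/

lemma fdet_self (u : ℤ × ℤ) : fdet u u = 0 := by
  simp only [fdet]; ring

lemma fdet_swap (u w : ℤ × ℤ) : fdet w u = -fdet u w := by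
  simp only [fdet]; ring

lemma fdet_smul_sub_left (x : ℤ) (a b w : ℤ × ℤ) :
    fdet (x • b - a) w = x * fdet b w - fdet a w := by
  simp only [fdet, Prod.fst_sub, Prod.snd_sub, Prod.smul_fst, Prod.smul_snd, smul_eq_mul]; ring

lemma fdet_smul_sub_right (x : ℤ) (a b w : ℤ × ℤ) :
    fdet w (x • b - a) = x * fdet w b - fdet w a := by
  simp only [fdet, Prod.fst_sub, Prod.snd_sub, Prod.smul_fst, Prod.smul_snd, smul_eq_mul]; ring

/-- `a, b` is a basis of `ℤ²`; `det(b, c) = 1` forces the `a`-coordinate of `c` to be `-1`. -/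
lemma eq_fdet_smul_sub_of_fdet_eq_one {a b c : ℤ × ℤ} (hab : fdet a b = 1) (hbc : fdet b c = 1) :
    c = fdet a c • b - a := by
  simp only [fdet] at hab hbc
  ext <;> simp only [fdet, Prod.fst_sub, Prod.snd_sub, Prod.smul_fst, Prod.smul_snd, smul_eq_mul]
  · linear_combination (-c.1) * hab + (-a.1) * hbc
  · linear_combination (-c.2) * hab + (-a.2) * hbc

def quiddity (n : ℕ) (v : ℕ → ℤ × ℤ) (i : ℕ) : ℤ :=
  (fdet (v ((i + n - 1) % n)) (v ((i + 1) % n))).natAbs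

lemma hill_rec_natCast {n : ℕ} {q : ℕ → ℤ} {V : ℤ → ℤ}
    (hV : ∀ j : ℤ, V (j + 1) = q ((j % (n : ℤ)).toNat) * V j - V (j - 1)) {k : ℕ} (hk : k < n) :
    V (k + 1) = q k * V k - V (k - 1) := by
  have := hV k
  rwa [Int.emod_eq_of_lt (by positivity) (by exact_mod_cast hk), Int.toNat_natCast] at this

namespace IsFareyPolygon

variable {n : ℕ} {v : ℕ → ℤ × ℤ}

lemma two_le (hv : IsFareyPolygon n v) : 2 ≤ n := by
  by_contra h
  have hlast := hv.2.2.2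
  rw [show n - 1 = 0 by omega, fdet_self] at hlast
  exact zero_ne_one hlast

lemma fdet_nonneg (hv : IsFareyPolygon n v) {i j : ℕ} (hij : i ≤ j) (hj : j < n) :
    0 ≤ fdet (v i) (v j) := by
  rcases hij.eq_or_lt with rfl | h
  · exact (fdet_self _).ge
  · exact (hv.2.1 i j h hj).le

lemma quiddity_zero (hv : IsFareyPolygon n v) : quiddity n v 0 = fdet (v 1) (v (n - 1)) := by
  have := hv.two_le
  rw [quiddity, zero_add, zero_add, Nat.mod_eq_of_lt (by omega : n - 1 < n),
    Nat.mod_eq_of_lt (by omega : 1 < n), fdet_swap, Int.natAbs_neg,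
    Int.natAbs_of_nonneg (hv.fdet_nonneg (by omega) (by omega))]

lemma quiddity_succ (hv : IsFareyPolygon n v) {k : ℕ} (hk : k + 2 < n) :
    quiddity n v (k + 1) = fdet (v k) (v (k + 2)) := by
  rw [quiddity, show k + 1 + n - 1 = k + n by omega, Nat.add_mod_right, Nat.mod_eq_of_lt (by omega),
    Nat.mod_eq_of_lt hk, Int.natAbs_of_nonneg (hv.fdet_nonneg (by omega) hk)]

lemma succ_succ_eq (hv : IsFareyPolygon n v) {k : ℕ} (hk : k + 2 < n) :
    v (k + 2) = quiddity n v (k + 1) • v (k + 1) - v k := by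
  rw [hv.quiddity_succ hk]
  exact eq_fdet_smul_sub_of_fdet_eq_one (hv.2.2.1 k (by omega)) (hv.2.2.1 (k + 1) (by omega))

lemma hill_eq_fdet (hv : IsFareyPolygon n v) {V : ℤ → ℤ}
    (hV : ∀ j : ℤ, V (j + 1) = quiddity n v ((j % (n : ℤ)).toNat) * V j - V (j - 1)) :
    ∀ k < n, V k = V 0 * fdet (v k) (v (n - 1)) - V (-1) * fdet (v 0) (v k) := by
  intro k
  induction k using Nat.twoStepInduction with
  | zero =>
    intro _
    simp [fdet_self, hv.2.2.2]
  | one =>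
    intro h1
    have hr := hill_rec_natCast hV (k := 0) (by omega)
    push_cast at hr ⊢
    rw [hr, hv.quiddity_zero, hv.2.2.1 0 h1]
    ring
  | more k ih0 ih1 =>
    intro hk
    have hr := hill_rec_natCast hV (k := k + 1) (by omega)
    push_cast at hr ih1 ⊢
    rw [show (k : ℤ) + 2 = k + 1 + 1 by ring, hr, add_sub_cancel_right, ih0 (by omega),
      ih1 (by omega), hv.succ_succ_eq hk, fdet_smul_sub_left, fdet_smul_sub_right]
    ring

end IsFareyPolygon

theorem stmt8_general (n : ℕ) (v : ℕ → ℤ × ℤ) (hv : IsFareyPolygon n v)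
    (q : ℕ → ℤ)
    (hq : ∀ i, q i = ((fdet (v ((i + n - 1) % n)) (v ((i + 1) % n))).natAbs : ℤ))
    (V : ℤ → ℤ)
    (hV : ∀ j : ℤ, V (j + 1) = q ((j % (n : ℤ)).toNat) * V j - V (j - 1))
    (hneg : V (-1) < 0) (hpos : 0 < V 0) :
    ∀ j : ℤ, 0 ≤ j → j ≤ (n : ℤ) - 1 → 0 < V j := by
  obtain rfl : q = quiddity n v := funext hq
  intro j hj0 hjn
  lift j to ℕ using hj0
  rcases Nat.eq_zero_or_pos j with rfl | hj
  · exact hpos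
  rw [hv.hill_eq_fdet hV j (by omega)]
  have hA : 0 ≤ fdet (v j) (v (n - 1)) := hv.fdet_nonneg (by omega) (by omega)
  have hB : 0 < fdet (v 0) (v j) := hv.2.1 0 j hj (by omega)
  nlinarith [mul_nonneg hpos.le hA, mul_pos (neg_pos.2 hneg) hB]

/-- Solutions of the Hill equation whose coefficients form the quiddity
`q i = |det(v_{(i-1) mod n}, v_{(i+1) mod n})|` (extended `n`-periodically)
of a Farey `n`-gon with `V (-1) < 0` and `V 0 > 0` are positive on `0, …, n-1` (non-oscillation). -/
theorem stmt8 (n : ℕ) (hn : 3 ≤ n) (v : ℕ → ℤ × ℤ) (hv : IsFareyPolygon n v)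
    (q : ℕ → ℤ)
    (hq : ∀ i, q i = ((fdet (v ((i + n - 1) % n)) (v ((i + 1) % n))).natAbs : ℤ))
    (V : ℤ → ℤ)
    (hV : ∀ j : ℤ, V (j + 1) = q ((j % (n : ℤ)).toNat) * V j - V (j - 1))
    (hneg : V (-1) < 0) (hpos : 0 < V 0) :
    ∀ j : ℤ, 0 ≤ j → j ≤ (n : ℤ) - 1 → 0 < V j :=
  stmt8_general n v hv q hq V hV hneg hpos
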